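/- Let p ∈ ℝ with 0 < |p| < 1, let q ∈ ℝ, and let φ₁, φ₂, φ₃, φ₄ ∈ ℂ with |φ₁|² + |φ₂|² + |φ₃|² + |φ₄|² = 1. Define d₀ = |φ₁ − φ₂|² + |φ₃ − φ₄|², d₁ = p(|φ₂ − φ₄|² − |φ₁ − φ₃|²) + q(|φ₂ + φ₃|² − |φ₁ + φ₄|²), d₂ = pq(|φ₁ + φ₂|² − |φ₃ + φ₄|²) + 2p²·ℜ(conj(φ₁ − φ₄)(φ₂ − φ₃)) + 2q²·ℜ(conj(φ₁ + φ₃)(φ₂ + φ₄)), A = 1 − d₀/2 − (1 − √(1 − p²))·d₂/(2p²), and f(x) = √(1 − p²)·(p²d₀ + p·d₁·x + d₂·x²)/(2π·p²·√(p² − x²)·(1 − x²)). Then A + ∫_{−|p|}^{|p|} f(x) dx = 1; i.e., the limit measure A·δ₀ + f(x)·1_{(−|p|,|p|)}(x) dx of Theorem 2(A) is a probability measure. -/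

import Mathlib

open Real MeasureTheory

noncomputable section

/-- `d₀ = |φ₁ − φ₂|² + |φ₃ − φ₄|²`. -/
def d0 (φ₁ φ₂ φ₃ φ₄ : ℂ) : ℝ :=
  Complex.normSq (φ₁ - φ₂) + Complex.normSq (φ₃ - φ₄)

/-- `d₁ = p(|φ₂ − φ₄|² − |φ₁ − φ₃|²) + q(|φ₂ + φ₃|² − |φ₁ + φ₄|²)`. -/
def d1 (p q : ℝ) (φ₁ φ₂ φ₃ φ₄ : ℂ) : ℝ :=
  p * (Complex.normSq (φ₂ - φ₄) - Complex.normSq (φ₁ - φ₃))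
    + q * (Complex.normSq (φ₂ + φ₃) - Complex.normSq (φ₁ + φ₄))

/-- `d₂ = pq(|φ₁ + φ₂|² − |φ₃ + φ₄|²) + 2p²ℜ(conj(φ₁ − φ₄)(φ₂ − φ₃)) + 2q²ℜ(conj(φ₁ + φ₃)(φ₂ + φ₄))`. -/
def d2 (p q : ℝ) (φ₁ φ₂ φ₃ φ₄ : ℂ) : ℝ :=
  p * q * (Complex.normSq (φ₁ + φ₂) - Complex.normSq (φ₃ + φ₄))
    + 2 * p ^ 2 * ((starRingEnd ℂ) (φ₁ - φ₄) * (φ₂ - φ₃)).re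
    + 2 * q ^ 2 * ((starRingEnd ℂ) (φ₁ + φ₃) * (φ₂ + φ₄)).re

/-- The coefficient `A` of the Dirac delta part of the limit measure. -/
def coeffA (p q : ℝ) (φ₁ φ₂ φ₃ φ₄ : ℂ) : ℝ :=
  1 - d0 φ₁ φ₂ φ₃ φ₄ / 2
    - (1 - Real.sqrt (1 - p ^ 2)) * d2 p q φ₁ φ₂ φ₃ φ₄ / (2 * p ^ 2)

/-- The density `f` of the continuous part of the limit measure. -/
def densF (p q : ℝ) (φ₁ φ₂ φ₃ φ₄ : ℂ) (x : ℝ) : ℝ :=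
  Real.sqrt (1 - p ^ 2) *
      (p ^ 2 * d0 φ₁ φ₂ φ₃ φ₄ + p * d1 p q φ₁ φ₂ φ₃ φ₄ * x + d2 p q φ₁ φ₂ φ₃ φ₄ * x ^ 2)
    / (2 * π * p ^ 2 * Real.sqrt (p ^ 2 - x ^ 2) * (1 - x ^ 2))

/-!
Substituting `x = |p| sin θ` removes the square-root singularity of `f` and turns it into a
rational function of `sin θ` on `(-π/2, π/2)`. Its odd part integrates to `0`, and since
`x² / (1 - x²) = 1 / (1 - x²) - 1`, everything reduces to
`∫_{-π/2}^{π/2} dθ / (cos² θ + r² sin² θ) = π / r` with `r = √(1 - p²)`. This gives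
`∫ f = d₀ / 2 + (1 - √(1 - p²)) d₂ / (2p²)`, which is exactly `1 - A`.
-/

theorem intervalIntegral.integral_eq_zero_of_odd {f : ℝ → ℝ} (hf : ∀ x, f (-x) = -f x) (a : ℝ) :
    ∫ x in -a..a, f x = 0 := by
  have h := intervalIntegral.integral_comp_neg (a := -a) (b := a) f
  simp only [hf, intervalIntegral.integral_neg, neg_neg] at h
  linarith

theorem cos_sq_add_mul_sin_sq_pos {c : ℝ} (hc : 0 < c) (θ : ℝ) :
    0 < cos θ ^ 2 + c * sin θ ^ 2 := by
  rcases eq_or_ne (sin θ) 0 with h | h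
  · have := sin_sq_add_cos_sq θ
    simp only [h] at this ⊢
    nlinarith
  · positivity

/-- `t + arctan (…)` is the branch of `arctan (r tan t)` that is continuous on all of `ℝ`
(by the subtraction formula for `arctan`). -/
theorem hasDerivAt_add_arctan_div {r : ℝ} (hr : 0 < r) (θ : ℝ) :
    HasDerivAt (fun t => t + arctan ((r - 1) * sin t * cos t / (cos t ^ 2 + r * sin t ^ 2)))
      (r / (cos θ ^ 2 + r ^ 2 * sin θ ^ 2)) θ := by
  have pyth := sin_sq_add_cos_sq θ
  have hD := (cos_sq_add_mul_sin_sq_pos hr θ).ne'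
  have hE := (cos_sq_add_mul_sin_sq_pos (pow_pos hr 2) θ).ne'
  have hN := ((hasDerivAt_sin θ).const_mul (r - 1)).mul (hasDerivAt_cos θ)
  have hDer := ((hasDerivAt_cos θ).pow 2).add (((hasDerivAt_sin θ).pow 2).const_mul r)
  refine ((hasDerivAt_id θ).add (hN.div hDer hD).arctan).congr_deriv ?_
  have hsum : (cos θ ^ 2 + r * sin θ ^ 2) ^ 2 + ((r - 1) * sin θ * cos θ) ^ 2
      = cos θ ^ 2 + r ^ 2 * sin θ ^ 2 := by
    linear_combination (cos θ ^ 2 + r ^ 2 * sin θ ^ 2) * pyth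
  have hsq : 1 + ((r - 1) * sin θ * cos θ / (cos θ ^ 2 + r * sin θ ^ 2)) ^ 2
      = (cos θ ^ 2 + r ^ 2 * sin θ ^ 2) / (cos θ ^ 2 + r * sin θ ^ 2) ^ 2 := by
    field_simp
    linear_combination hsum
  simp only [Pi.mul_apply, Pi.div_apply, Pi.add_apply, Pi.pow_apply, hsq]
  field_simp
  linear_combination ((r - 1) * (cos θ ^ 2 - r * sin θ ^ 2 + 1) + 1) * pyth

theorem integral_inv_cos_sq_add_sq_mul_sin_sq {r : ℝ} (hr : 0 < r) :
    ∫ θ in -(π / 2)..π / 2, (cos θ ^ 2 + r ^ 2 * sin θ ^ 2)⁻¹ = π / r := by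
  have hcont : Continuous fun θ => (cos θ ^ 2 + r ^ 2 * sin θ ^ 2)⁻¹ :=
    Continuous.inv₀ (by fun_prop) fun θ => (cos_sq_add_mul_sin_sq_pos (pow_pos hr 2) θ).ne'
  have h := intervalIntegral.integral_eq_sub_of_hasDerivAt (a := -(π / 2)) (b := π / 2)
    (fun θ _ => hasDerivAt_add_arctan_div hr θ) ((hcont.const_mul r).intervalIntegrable _ _)
  norm_num [div_eq_mul_inv r, intervalIntegral.integral_const_mul] at h
  rw [eq_div_iff hr.ne', mul_comm]
  exact h

theorem integral_Ioo_div_sqrt_sq_sub_sq {a : ℝ} (ha : 0 < a) (h : ℝ → ℝ) :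
    ∫ x in Set.Ioo (-a) a, h x / √(a ^ 2 - x ^ 2) = ∫ θ in -(π / 2)..π / 2, h (a * sin θ) := by
  have hmono : StrictMonoOn (fun θ => a * sin θ) (Set.Icc (-(π / 2)) (π / 2)) :=
    fun _ hx _ hy hxy => mul_lt_mul_of_pos_left (strictMonoOn_sin hx hy hxy) ha
  have himage : (fun θ => a * sin θ) '' Set.Ioo (-(π / 2)) (π / 2) = Set.Ioo (-a) a := by
    rw [ContinuousOn.image_Ioo_of_strictMonoOn (by linarith [pi_pos]) (by fun_prop) hmono]
    simp
  rw [← himage, integral_image_eq_integral_abs_deriv_smul measurableSet_Ioo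
      (fun θ _ => ((hasDerivAt_sin θ).const_mul a).hasDerivWithinAt)
      (hmono.injOn.mono Set.Ioo_subset_Icc_self),
    intervalIntegral.integral_of_le (by linarith [pi_pos]), integral_Ioc_eq_integral_Ioo]
  refine setIntegral_congr_fun measurableSet_Ioo fun θ hθ => ?_
  have hcos : 0 < a * cos θ := mul_pos ha (cos_pos_of_mem_Ioo hθ)
  have hsqrt : √(a ^ 2 - (a * sin θ) ^ 2) = a * cos θ := by
    rw [← sqrt_sq hcos.le]
    congr 1
    linear_combination -a ^ 2 * sin_sq_add_cos_sq θ
  rw [smul_eq_mul, hsqrt, abs_of_pos hcos, mul_div_cancel₀ _ hcos.ne']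

theorem one_sub_sq_mul_sin_sq_pos {p : ℝ} (hp : p ^ 2 < 1) (θ : ℝ) :
    0 < 1 - p ^ 2 * sin θ ^ 2 := by
  nlinarith [sin_sq_le_one θ, sq_nonneg p]

theorem integral_inv_one_sub_sq_mul_sin_sq {p : ℝ} (hp : p ^ 2 < 1) :
    ∫ θ in -(π / 2)..π / 2, (1 - p ^ 2 * sin θ ^ 2)⁻¹ = π / √(1 - p ^ 2) := by
  have hr : √(1 - p ^ 2) ^ 2 = 1 - p ^ 2 := sq_sqrt (by linarith)
  rw [← integral_inv_cos_sq_add_sq_mul_sin_sq (sqrt_pos.2 (by linarith))]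
  congr with θ
  congr 1
  rw [hr]
  linear_combination -sin_sq_add_cos_sq θ

theorem integral_quadratic_sin_div_one_sub_sq_mul_sin_sq {p : ℝ} (hp0 : p ≠ 0) (hp1 : p ^ 2 < 1)
    (α β γ : ℝ) :
    ∫ θ in -(π / 2)..π / 2, (α + β * sin θ + γ * sin θ ^ 2) / (1 - p ^ 2 * sin θ ^ 2)
      = π * ((α + γ / p ^ 2) / √(1 - p ^ 2) - γ / p ^ 2) := by
  have hsplit : ∀ θ, (α + β * sin θ + γ * sin θ ^ 2) / (1 - p ^ 2 * sin θ ^ 2)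
      = (α + γ / p ^ 2) * (1 - p ^ 2 * sin θ ^ 2)⁻¹ + β * (sin θ * (1 - p ^ 2 * sin θ ^ 2)⁻¹)
        - γ / p ^ 2 := fun θ => by
    have hD := (one_sub_sq_mul_sin_sq_pos hp1 θ).ne'
    set D := 1 - p ^ 2 * sin θ ^ 2 with hD_def
    have hγ : γ * sin θ ^ 2 = γ / p ^ 2 * (1 - D) := by
      rw [hD_def]
      field_simp
      ring
    rw [hγ]
    field_simp
    ring
  have hcont : Continuous fun θ => (1 - p ^ 2 * sin θ ^ 2)⁻¹ :=
    Continuous.inv₀ (by fun_prop) fun θ => (one_sub_sq_mul_sin_sq_pos hp1 θ).ne'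
  have hodd : ∫ θ in -(π / 2)..π / 2, sin θ * (1 - p ^ 2 * sin θ ^ 2)⁻¹ = 0 :=
    intervalIntegral.integral_eq_zero_of_odd (fun θ => by simp [sin_neg]) _
  simp only [hsplit]
  rw [intervalIntegral.integral_sub, intervalIntegral.integral_add,
    intervalIntegral.integral_const_mul, intervalIntegral.integral_const_mul,
    integral_inv_one_sub_sq_mul_sin_sq hp1, hodd, intervalIntegral.integral_const]
  · simp only [smul_eq_mul]
    ring
  all_goals exact Continuous.intervalIntegrable (by fun_prop) _ _

theorem integral_quadratic_div_sqrt_sq_sub_sq_mul_one_sub_sq {a : ℝ} (ha0 : 0 < a) (ha1 : a < 1)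
    (α β γ : ℝ) :
    ∫ x in Set.Ioo (-a) a, (α + β * x + γ * x ^ 2) / (√(a ^ 2 - x ^ 2) * (1 - x ^ 2))
      = π * ((α + γ) / √(1 - a ^ 2) - γ) := by
  simp_rw [mul_comm (√_), ← div_div]
  rw [integral_Ioo_div_sqrt_sq_sub_sq ha0 fun x => (α + β * x + γ * x ^ 2) / (1 - x ^ 2)]
  simp_rw [mul_pow, ← mul_assoc]
  rw [integral_quadratic_sin_div_one_sub_sq_mul_sin_sq (by positivity) (by nlinarith)]
  field_simp

theorem limit_measure_is_probability_general (p q : ℝ) (hp0 : 0 < |p|) (hp1 : |p| < 1)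
    (φ₁ φ₂ φ₃ φ₄ : ℂ) :
    coeffA p q φ₁ φ₂ φ₃ φ₄
        + ∫ x in Set.Ioo (-|p|) |p|, densF p q φ₁ φ₂ φ₃ φ₄ x = 1 := by
  have hp : p ≠ 0 := abs_pos.1 hp0
  have hr : 0 < √(1 - p ^ 2) := sqrt_pos.2 (by rw [← sq_abs]; nlinarith)
  have hdens : ∀ x, densF p q φ₁ φ₂ φ₃ φ₄ x = √(1 - p ^ 2) / (2 * π * p ^ 2) *
      ((p ^ 2 * d0 φ₁ φ₂ φ₃ φ₄ + p * d1 p q φ₁ φ₂ φ₃ φ₄ * x + d2 p q φ₁ φ₂ φ₃ φ₄ * x ^ 2) /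
        (√(|p| ^ 2 - x ^ 2) * (1 - x ^ 2))) := fun x => by
    rw [densF, sq_abs, mul_assoc (2 * π * p ^ 2), mul_div_mul_comm]
  simp_rw [hdens]
  rw [integral_const_mul, integral_quadratic_div_sqrt_sq_sub_sq_mul_one_sub_sq hp0 hp1, sq_abs,
    coeffA]
  field_simp
  ring

/-- The limit measure `A·δ₀ + f(x)·1_{(−|p|,|p|)}(x) dx` of Theorem 2(A) is a probability
measure: `A + ∫_{−|p|}^{|p|} f(x) dx = 1`. -/
theorem limit_measure_is_probability (p q : ℝ) (hp0 : 0 < |p|) (hp1 : |p| < 1)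
    (φ₁ φ₂ φ₃ φ₄ : ℂ)
    (hφ : Complex.normSq φ₁ + Complex.normSq φ₂ + Complex.normSq φ₃ + Complex.normSq φ₄ = 1) :
    coeffA p q φ₁ φ₂ φ₃ φ₄
        + ∫ x in Set.Ioo (-|p|) |p|, densF p q φ₁ φ₂ φ₃ φ₄ x = 1 :=
  limit_measure_is_probability_general p q hp0 hp1 φ₁ φ₂ φ₃ φ₄

end
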